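/- arXiv:2407.11241 — 2 statements merged into one kernel-verified Lean document; each statement's English description precedes it below -/
import Mathlib

section
/- Fix integers m ≥ 0, n ≥ 1, and constants C₁, C₂ ∈ ℝ. The trial state u_{m,n}(r) = r^m L^m_{n-1}(b r²/2)(C₁ e^{(b/4)(1−r²)} + C₂ e^{−(b/4)(1−r²)}) satisfies H_{m,b} u_{m,n} = (2n−1) b u_{m,n} + R_{m,n} on (0, ∞), where R_{m,n}(r) = −2 b C₂ r^m e^{−(b/4)(1−r²)} (b r² (L^m_{n-1})'(b r²/2) + (m+1) L^m_{n-1}(b r²/2)). -/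
/-- The associated Laguerre polynomial of degree `k` with parameter `m`. -/
noncomputable def laguerre (m k : ℕ) (s : ℝ) : ℝ :=
  ∑ l ∈ Finset.range (k + 1),
    ((-1 : ℝ) ^ l / l.factorial) * ((k + m).choose (k - l)) * s ^ l

/-- The radial magnetic operator `H_{m,b} u = -u'' - u'/r + (m/r - br/2)^2 u`. -/
noncomputable def Hop (m : ℕ) (b : ℝ) (u : ℝ → ℝ) (r : ℝ) : ℝ :=
  -(deriv (deriv u) r) - deriv u r / r + ((m : ℝ) / r - b * r / 2) ^ 2 * u r

/-- The trial state `u_{m,n}`. -/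
noncomputable def trialState (m n : ℕ) (b C₁ C₂ : ℝ) (r : ℝ) : ℝ :=
  r ^ m * laguerre m (n - 1) (b * r ^ 2 / 2) *
    (C₁ * Real.exp (b / 4 * (1 - r ^ 2)) + C₂ * Real.exp (-(b / 4) * (1 - r ^ 2)))

/-- The remainder `R_{m,n}`. -/
noncomputable def remainderR (m n : ℕ) (b C₂ : ℝ) (r : ℝ) : ℝ :=
  -2 * b * C₂ * r ^ m * Real.exp (-(b / 4) * (1 - r ^ 2)) *
    (b * r ^ 2 * deriv (laguerre m (n - 1)) (b * r ^ 2 / 2)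
      + ((m : ℝ) + 1) * laguerre m (n - 1) (b * r ^ 2 / 2))

noncomputable def lagD (m k : ℕ) (s : ℝ) : ℝ :=
  ∑ l ∈ Finset.range (k + 1),
    ((-1 : ℝ) ^ l / l.factorial) * ((k + m).choose (k - l)) * ((l : ℝ) * s ^ (l - 1))

noncomputable def lagD2 (m k : ℕ) (s : ℝ) : ℝ :=
  ∑ l ∈ Finset.range (k + 1),
    ((-1 : ℝ) ^ l / l.factorial) * ((k + m).choose (k - l)) *
      ((l : ℝ) * (((l : ℝ) - 1) * s ^ (l - 2)))

lemma hasDerivAt_laguerre (m k : ℕ) (s : ℝ) :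
    HasDerivAt (laguerre m k) (lagD m k s) s := by
  unfold laguerre lagD
  refine HasDerivAt.fun_sum fun l _ => ?_
  have h := (hasDerivAt_pow l s).const_mul
    ((-1 : ℝ) ^ l / l.factorial * ((k + m).choose (k - l)))
  convert h using 1 <;> (try ext x) <;> ring

lemma deriv_laguerre (m k : ℕ) : deriv (laguerre m k) = lagD m k :=
  funext fun s => (hasDerivAt_laguerre m k s).deriv

lemma hasDerivAt_lagD (m k : ℕ) (s : ℝ) :
    HasDerivAt (lagD m k) (lagD2 m k s) s := by
  unfold lagD lagD2
  refine HasDerivAt.fun_sum fun l _ => ?_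
  have h := (hasDerivAt_pow (l - 1) s).const_mul
    ((-1 : ℝ) ^ l / l.factorial * ((k + m).choose (k - l)) * l)
  have hl : l - 1 - 1 = l - 2 := by omega
  rw [hl] at h
  rcases Nat.eq_zero_or_pos l with h0 | h1
  · subst h0; simpa using h
  · rw [Nat.cast_sub h1] at h
    convert h using 1 <;> (try ext x) <;> (try push_cast) <;> ring


lemma laguerre_ode (m k : ℕ) (s : ℝ) :
    s * lagD2 m k s + ((m : ℝ) + 1 - s) * lagD m k s + (k : ℝ) * laguerre m k s = 0 := by
  have h1 : s * lagD2 m k s + ((m : ℝ) + 1) * lagD m k s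
      = ∑ l ∈ Finset.range (k + 1),
        ((-1 : ℝ) ^ l / l.factorial) * ((k + m).choose (k - l)) *
          ((l : ℝ) * ((l : ℝ) + m) * s ^ (l - 1)) := by
    unfold lagD lagD2
    rw [Finset.mul_sum, Finset.mul_sum, ← Finset.sum_add_distrib]
    refine Finset.sum_congr rfl fun l _ => ?_
    match l with
    | 0 => simp
    | 1 => push_cast; ring
    | (j+2) =>
      have e1 : (j + 2) - 2 = j := by omega
      have e2 : (j + 2) - 1 = j + 1 := by omega
      rw [e1, e2]
      push_cast
      ring
  have h2 : s * lagD m k s - (k : ℝ) * laguerre m k s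
      = ∑ l ∈ Finset.range (k + 1),
        ((-1 : ℝ) ^ l / l.factorial) * ((k + m).choose (k - l)) *
          (((l : ℝ) - k) * s ^ l) := by
    unfold lagD laguerre
    rw [Finset.mul_sum, Finset.mul_sum, ← Finset.sum_sub_distrib]
    refine Finset.sum_congr rfl fun l _ => ?_
    match l with
    | 0 => simp; ring
    | (j+1) =>
      have e2 : (j + 1) - 1 = j := by omega
      rw [e2]
      push_cast
      ring
  have h3 : (∑ l ∈ Finset.range (k + 1),
        ((-1 : ℝ) ^ l / l.factorial) * ((k + m).choose (k - l)) *
          ((l : ℝ) * ((l : ℝ) + m) * s ^ (l - 1)))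
      = ∑ l ∈ Finset.range (k + 1),
        ((-1 : ℝ) ^ l / l.factorial) * ((k + m).choose (k - l)) *
          (((l : ℝ) - k) * s ^ l) := by
    rw [Finset.sum_range_succ' _ k, Finset.sum_range_succ _ k]
    simp only [Nat.cast_zero, zero_mul, mul_zero, add_zero, Nat.cast_ofNat]
    have hk : ((k : ℝ) - k) * s ^ k = 0 := by ring
    rw [hk, mul_zero, add_zero]
    refine Finset.sum_congr rfl fun l hl => ?_
    have hlk : l < k := Finset.mem_range.mp hl
    -- key binomial identity
    have hC : ((k + m).choose (k - l - 1)) * (m + l + 1) = ((k + m).choose (k - l)) * (k - l) := by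
      have h := Nat.choose_succ_right_eq (k + m) (k - l - 1)
      have e1 : k - l - 1 + 1 = k - l := by omega
      have e2 : k + m - (k - l - 1) = m + l + 1 := by omega
      rw [e1, e2] at h
      omega
    have e3 : k - (l + 1) = k - l - 1 := by omega
    have e4 : (l + 1) - 1 = l := by omega
    rw [e3, e4]
    have hfac : (((l + 1).factorial : ℝ)) = (l + 1) * l.factorial := by
      push_cast [Nat.factorial_succ]; ring
    have hfl : (l.factorial : ℝ) ≠ 0 := by positivity
    have hCr : (((k + m).choose (k - l - 1)) : ℝ) * ((m : ℝ) + l + 1)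
        = (((k + m).choose (k - l)) : ℝ) * ((k : ℝ) - l) := by
      have := congrArg (Nat.cast : ℕ → ℝ) hC
      push_cast [Nat.cast_sub hlk.le] at this
      linarith [this]
    rw [hfac]
    push_cast
    field_simp
    linear_combination (-(-1:ℝ)^l * s^l) * hCr
  linear_combination h1 - h2 + h3

noncomputable def Efun (b C₁ C₂ r : ℝ) : ℝ :=
  C₁ * Real.exp (b / 4 * (1 - r ^ 2)) + C₂ * Real.exp (-(b / 4) * (1 - r ^ 2))

noncomputable def E1fun (b C₁ C₂ r : ℝ) : ℝ :=
  C₁ * Real.exp (b / 4 * (1 - r ^ 2)) * (-(b / 2) * r)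
    + C₂ * Real.exp (-(b / 4) * (1 - r ^ 2)) * ((b / 2) * r)

noncomputable def E2fun (b C₁ C₂ r : ℝ) : ℝ :=
  C₁ * Real.exp (b / 4 * (1 - r ^ 2)) * (b ^ 2 / 4 * r ^ 2 - b / 2)
    + C₂ * Real.exp (-(b / 4) * (1 - r ^ 2)) * (b ^ 2 / 4 * r ^ 2 + b / 2)

lemma hasDerivAt_inner (c r : ℝ) :
    HasDerivAt (fun r : ℝ => c * (1 - r ^ 2)) (c * (-(2 * r))) r := by
  have h : HasDerivAt (fun r : ℝ => 1 - r ^ 2) (-(2 * r)) r := by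
    simpa using ((hasDerivAt_pow 2 r).const_sub 1)
  exact h.const_mul c

lemma hasDerivAt_expA (c r : ℝ) :
    HasDerivAt (fun r : ℝ => Real.exp (c * (1 - r ^ 2)))
      (Real.exp (c * (1 - r ^ 2)) * (c * (-(2 * r)))) r :=
  (hasDerivAt_inner c r).exp

lemma hasDerivAt_Efun (b C₁ C₂ r : ℝ) :
    HasDerivAt (Efun b C₁ C₂) (E1fun b C₁ C₂ r) r := by
  unfold Efun E1fun
  have h := ((hasDerivAt_expA (b / 4) r).const_mul C₁).add
    ((hasDerivAt_expA (-(b / 4)) r).const_mul C₂)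
  exact h.congr_deriv (by ring)

lemma hasDerivAt_E1fun (b C₁ C₂ r : ℝ) :
    HasDerivAt (E1fun b C₁ C₂) (E2fun b C₁ C₂ r) r := by
  unfold E1fun E2fun
  have hlin : HasDerivAt (fun r : ℝ => -(b / 2) * r) (-(b / 2)) r := by
    simpa using (hasDerivAt_id r).const_mul (-(b / 2))
  have hlin2 : HasDerivAt (fun r : ℝ => (b / 2) * r) (b / 2) r := by
    simpa using (hasDerivAt_id r).const_mul (b / 2)
  have h := ((((hasDerivAt_expA (b / 4) r).const_mul C₁).mul hlin)).add
    ((((hasDerivAt_expA (-(b / 4)) r).const_mul C₂).mul hlin2))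
  exact h.congr_deriv (by ring)

noncomputable def sfun (b r : ℝ) : ℝ := b * r ^ 2 / 2

lemma hasDerivAt_sfun (b r : ℝ) : HasDerivAt (fun r : ℝ => b * r ^ 2 / 2) (b * r) r := by
  have h := ((hasDerivAt_pow 2 r).const_mul b).div_const 2
  exact h.congr_deriv (by ring)

lemma hasDerivAt_Lc (m k : ℕ) (b r : ℝ) :
    HasDerivAt (fun r : ℝ => laguerre m k (b * r ^ 2 / 2))
      (lagD m k (b * r ^ 2 / 2) * (b * r)) r :=
  by have h := (hasDerivAt_laguerre m k (b * r ^ 2 / 2)).comp r (hasDerivAt_sfun b r); exact h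

lemma hasDerivAt_Dc (m k : ℕ) (b r : ℝ) :
    HasDerivAt (fun r : ℝ => lagD m k (b * r ^ 2 / 2))
      (lagD2 m k (b * r ^ 2 / 2) * (b * r)) r :=
  by have h := (hasDerivAt_lagD m k (b * r ^ 2 / 2)).comp r (hasDerivAt_sfun b r); exact h

noncomputable def u1fun (m k : ℕ) (b C₁ C₂ r : ℝ) : ℝ :=
  (m : ℝ) * r ^ (m - 1) * laguerre m k (b * r ^ 2 / 2) * Efun b C₁ C₂ r
    + r ^ m * (lagD m k (b * r ^ 2 / 2) * (b * r)) * Efun b C₁ C₂ r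
    + r ^ m * laguerre m k (b * r ^ 2 / 2) * E1fun b C₁ C₂ r

lemma hasDerivAt_u (m k : ℕ) (b C₁ C₂ r : ℝ) :
    HasDerivAt (fun r : ℝ => r ^ m * laguerre m k (b * r ^ 2 / 2) * Efun b C₁ C₂ r)
      (u1fun m k b C₁ C₂ r) r := by
  have h := ((hasDerivAt_pow m r).mul (hasDerivAt_Lc m k b r)).mul (hasDerivAt_Efun b C₁ C₂ r)
  exact h.congr_deriv (by unfold u1fun; simp only [Pi.mul_apply]; ring)

noncomputable def u2fun (m k : ℕ) (b C₁ C₂ r : ℝ) : ℝ :=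
  (m : ℝ) * ((m - 1 : ℕ) : ℝ) * r ^ (m - 1 - 1) * laguerre m k (b * r ^ 2 / 2) * Efun b C₁ C₂ r
    + 2 * (m : ℝ) * r ^ (m - 1) * lagD m k (b * r ^ 2 / 2) * (b * r) * Efun b C₁ C₂ r
    + 2 * (m : ℝ) * r ^ (m - 1) * laguerre m k (b * r ^ 2 / 2) * E1fun b C₁ C₂ r
    + r ^ m * lagD2 m k (b * r ^ 2 / 2) * (b * r) ^ 2 * Efun b C₁ C₂ r
    + r ^ m * lagD m k (b * r ^ 2 / 2) * b * Efun b C₁ C₂ r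
    + 2 * r ^ m * lagD m k (b * r ^ 2 / 2) * (b * r) * E1fun b C₁ C₂ r
    + r ^ m * laguerre m k (b * r ^ 2 / 2) * E2fun b C₁ C₂ r

lemma hasDerivAt_u1 (m k : ℕ) (b C₁ C₂ r : ℝ) :
    HasDerivAt (u1fun m k b C₁ C₂) (u2fun m k b C₁ C₂ r) r := by
  have hbr : HasDerivAt (fun r : ℝ => b * r) b r := by
    simpa using (hasDerivAt_id r).const_mul b
  have hpm1 : HasDerivAt (fun r : ℝ => (m : ℝ) * r ^ (m - 1))
      ((m : ℝ) * (((m - 1 : ℕ) : ℝ) * r ^ (m - 1 - 1))) r :=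
    (hasDerivAt_pow (m - 1) r).const_mul (m : ℝ)
  have h1 := ((hpm1.mul (hasDerivAt_Lc m k b r))).mul (hasDerivAt_Efun b C₁ C₂ r)
  have h2 := (((hasDerivAt_pow m r).mul
      ((hasDerivAt_Dc m k b r).mul hbr))).mul (hasDerivAt_Efun b C₁ C₂ r)
  have h3 := (((hasDerivAt_pow m r).mul (hasDerivAt_Lc m k b r))).mul
      (hasDerivAt_E1fun b C₁ C₂ r)
  have h := (h1.add h2).add h3
  exact h.congr_deriv (by unfold u2fun; simp only [Pi.mul_apply]; ring)

lemma trialState_eq (m n : ℕ) (b C₁ C₂ : ℝ) :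
    trialState m n b C₁ C₂
      = fun r : ℝ => r ^ m * laguerre m (n - 1) (b * r ^ 2 / 2) * Efun b C₁ C₂ r := rfl

/-- `H_{m,b} u_{m,n} = (2n-1) b u_{m,n} + R_{m,n}` on `(0,∞)`. -/
theorem Hop_trialState (m n : ℕ) (hn : 1 ≤ n) (b : ℝ) (hb : 0 < b) (C₁ C₂ : ℝ) :
    ∀ r ∈ Set.Ioi (0 : ℝ),
      Hop m b (trialState m n b C₁ C₂) r
        = (2 * (n : ℝ) - 1) * b * trialState m n b C₁ C₂ r + remainderR m n b C₂ r := by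
  intro r hrmem
  have hr : r ≠ 0 := ne_of_gt hrmem
  have hode := laguerre_ode m (n - 1) (b * r ^ 2 / 2)
  rw [Nat.cast_sub hn, Nat.cast_one] at hode
  have hd1 : deriv (trialState m n b C₁ C₂) = u1fun m (n - 1) b C₁ C₂ := by
    rw [trialState_eq]
    exact funext fun x => (hasDerivAt_u m (n - 1) b C₁ C₂ x).deriv
  simp only [Hop, hd1, (hasDerivAt_u1 m (n - 1) b C₁ C₂ r).deriv]
  simp only [u1fun, u2fun, trialState, remainderR, Efun, E1fun, E2fun, deriv_laguerre]
  set L := laguerre m (n - 1) (b * r ^ 2 / 2) with hLdef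
  set D := lagD m (n - 1) (b * r ^ 2 / 2) with hDdef
  set D2 := lagD2 m (n - 1) (b * r ^ 2 / 2) with hD2def
  set A := Real.exp (b / 4 * (1 - r ^ 2)) with hAdef
  set B := Real.exp (-(b / 4) * (1 - r ^ 2)) with hBdef
  match m with
  | 0 =>
    simp only [pow_zero, Nat.cast_zero, Nat.zero_sub, Nat.cast_ofNat, CharP.cast_eq_zero]
    field_simp
    linear_combination (-32 * b * r ^ 2 * (C₁ * A + C₂ * B)) * hode
  | 1 =>
    simp only [Nat.cast_one, show (1-1:ℕ) = 0 from rfl, pow_zero, pow_one, Nat.cast_zero]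
    field_simp
    linear_combination (-32 * b * r ^ 2 * (C₁ * A + C₂ * B)) * hode
  | (j+2) =>
    simp only [show (j+2)-1 = j+1 from rfl, show (j+2)-1-1 = j from rfl]
    push_cast at hode ⊢
    field_simp
    linear_combination (-32 * b * r ^ (j + 2) * r ^ 2 * (C₁ * A + C₂ * B)) * hode
end

section
/- Fix integers m ≥ 0 and i ≠ j with i, j ≥ 1. Then e^{b/2} ∫_0^{b/2} s^m L^m_{i-1}(s) L^m_{j-1}(s) e^{-s} ds = O(b^{m+i+j−2}) as b → +∞. -/
open Filter Asymptotics

/-- Coefficient of `s^p` in `laguerre m k`. -/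
noncomputable def lagC (m k p : ℕ) : ℝ :=
  ((-1 : ℝ) ^ p / p.factorial) * ((k + m).choose (k - p))

lemma laguerre_eq (m k : ℕ) (s : ℝ) :
    laguerre m k s = ∑ p ∈ Finset.range (k + 1), lagC m k p * s ^ p := rfl

/-- The `n`-th finite difference of a polynomial of degree `< n` vanishes. -/
lemma fd : ∀ (n : ℕ) (P : Polynomial ℝ), P.degree < n →
    ∑ q ∈ Finset.range (n + 1), (-1 : ℝ) ^ q * (n.choose q) * P.eval (q : ℝ) = 0 := by
  intro n
  induction n with
  | zero =>
    intro P hP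
    have hP0 : P = 0 := by
      by_contra hne
      exact absurd hP (not_lt.mpr (by simpa using Polynomial.zero_le_degree_iff.mpr hne))
    simp [hP0]
  | succ n ih =>
    intro P hP
    set Q : Polynomial ℝ := P - P.comp (Polynomial.X + Polynomial.C 1) with hQ
    have hQdeg : Q.degree < n := by
      rcases eq_or_ne P 0 with rfl | hne
      · simpa [hQ] using (by exact_mod_cast WithBot.bot_lt_coe n : (⊥ : WithBot ℕ) < (n : WithBot ℕ))
      · have hnd : (Polynomial.X + Polynomial.C (1:ℝ)).natDegree = 1 := Polynomial.natDegree_X_add_C 1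
        have hlc : P.leadingCoeff = (P.comp (Polynomial.X + Polynomial.C 1)).leadingCoeff := by
          rw [Polynomial.leadingCoeff_comp (by rw [hnd]; norm_num)]
          rw [(Polynomial.monic_X_add_C (1:ℝ)).leadingCoeff, one_pow, mul_one]
        have hcompne : P.comp (Polynomial.X + Polynomial.C 1) ≠ 0 := by
          intro h
          apply hne
          have := hlc
          rw [h, Polynomial.leadingCoeff_zero] at this
          exact Polynomial.leadingCoeff_eq_zero.mp this
        have hdegc : (P.comp (Polynomial.X + Polynomial.C 1)).degree = P.degree := by
          rw [Polynomial.degree_eq_natDegree hcompne, Polynomial.degree_eq_natDegree hne,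
            Polynomial.natDegree_comp, hnd, mul_one]
        have h1 : Q.degree < P.degree := Polynomial.degree_sub_lt hdegc.symm hne hlc
        have h2 : P.degree ≤ n := by
          have hn1 : P.natDegree < n + 1 := (Polynomial.natDegree_lt_iff_degree_lt hne).mpr (by exact_mod_cast hP)
          calc P.degree ≤ P.natDegree := Polynomial.degree_le_natDegree
          _ ≤ (n : WithBot ℕ) := by exact_mod_cast Nat.lt_succ_iff.mp hn1
        exact lt_of_lt_of_le h1 h2
    have hQeval : ∀ q : ℕ, Q.eval (q : ℝ) = P.eval (q : ℝ) - P.eval ((q : ℝ) + 1) := by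
      intro q; simp [hQ, Polynomial.eval_comp]
    have key : ∀ i : ℕ, (-1 : ℝ) ^ (i + 1) * (((n + 1).choose (i + 1) : ℕ) : ℝ) * P.eval ((i + 1 : ℕ) : ℝ)
        = (-1 : ℝ) ^ (i + 1) * ((n.choose (i + 1) : ℕ) : ℝ) * P.eval (((i + 1 : ℕ) : ℝ))
          - (-1 : ℝ) ^ i * ((n.choose i : ℕ) : ℝ) * P.eval ((i : ℝ) + 1) := by
      intro i
      rw [Nat.choose_succ_succ]
      push_cast
      ring
    rw [Finset.sum_range_succ']
    rw [Finset.sum_congr rfl fun i _ => key i]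
    rw [Finset.sum_sub_distrib]
    have hA : (∑ i ∈ Finset.range (n + 1), (-1 : ℝ) ^ (i + 1) * ((n.choose (i + 1) : ℕ) : ℝ) * P.eval ((i + 1 : ℕ) : ℝ))
        + (-1 : ℝ) ^ 0 * (((n + 1).choose 0 : ℕ) : ℝ) * P.eval ((0 : ℕ) : ℝ)
        = ∑ q ∈ Finset.range (n + 1), (-1 : ℝ) ^ q * ((n.choose q : ℕ) : ℝ) * P.eval (q : ℝ) := by
      have h0 : (((n + 1).choose 0 : ℕ) : ℝ) = ((n.choose 0 : ℕ) : ℝ) := by simp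
      rw [h0, ← Finset.sum_range_succ' (fun q => (-1 : ℝ) ^ q * ((n.choose q : ℕ) : ℝ) * P.eval (q : ℝ)) (n + 1),
        Finset.sum_range_succ]
      simp
    have hI := ih Q hQdeg
    rw [Finset.sum_congr rfl (fun q _ => by rw [hQeval q])] at hI
    have hI2 : ∑ q ∈ Finset.range (n + 1), (-1 : ℝ) ^ q * ((n.choose q : ℕ) : ℝ) * P.eval (q : ℝ)
        - ∑ q ∈ Finset.range (n + 1), (-1 : ℝ) ^ q * ((n.choose q : ℕ) : ℝ) * P.eval ((q : ℝ) + 1) = 0 := by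
      rw [← Finset.sum_sub_distrib]
      rw [← hI]
      apply Finset.sum_congr rfl
      intro q _
      ring
    push_cast at hA hI2 ⊢
    linarith [hA, hI2]

lemma natfac (m q : ℕ) : ∀ p : ℕ, (m + q).factorial * ∏ t ∈ Finset.range p, (m + q + t + 1) = (m + p + q).factorial := by
  intro p
  induction p with
  | zero => simp
  | succ p ihp =>
    rw [Finset.prod_range_succ, show m + (p + 1) + q = (m + p + q) + 1 from by omega,
      Nat.factorial_succ, ← ihp]
    ring

lemma choosefac (k' m q : ℕ) (hq : q ≤ k') :
    (k' + m).choose (k' - q) * (m + q).factorial * k'.factorial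
      = (k' + m).factorial * (k'.choose q * q.factorial) := by
  have h1 : (k' + m).choose (k' - q) * (k' - q).factorial * (m + q).factorial = (k' + m).factorial := by
    have := Nat.choose_mul_factorial_mul_factorial (show k' - q ≤ k' + m by omega)
    rwa [show k' + m - (k' - q) = m + q by omega] at this
  have h2 : k'.choose q * q.factorial * (k' - q).factorial = k'.factorial := Nat.choose_mul_factorial_mul_factorial hq
  apply Nat.eq_of_mul_eq_mul_right (Nat.factorial_pos (k' - q))
  calc (k' + m).choose (k' - q) * (m + q).factorial * k'.factorial * (k' - q).factorial
      = ((k' + m).choose (k' - q) * (k' - q).factorial * (m + q).factorial) * k'.factorial := by ring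
    _ = (k' + m).factorial * k'.factorial := by rw [h1]
    _ = (k' + m).factorial * (k'.choose q * q.factorial * (k' - q).factorial) := by rw [h2]
    _ = (k' + m).factorial * (k'.choose q * q.factorial) * (k' - q).factorial := by ring

/-- Orthogonality of `laguerre m k'` against low-degree monomials, in coefficient form. -/
lemma orth (m p k' : ℕ) (hpk : p < k') :
    ∑ q ∈ Finset.range (k' + 1), lagC m k' q * ((m + p + q).factorial : ℝ) = 0 := by
  set P : Polynomial ℝ := ∏ t ∈ Finset.range p, (Polynomial.X + Polynomial.C ((m + t + 1 : ℕ) : ℝ)) with hP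
  have hPdeg : P.degree < k' := by
    have : P.degree = p := by
      rw [hP, Polynomial.degree_prod]
      rw [Finset.sum_congr rfl fun t _ => Polynomial.degree_X_add_C ((m + t + 1 : ℕ) : ℝ)]
      simp
    rw [this]
    exact_mod_cast hpk
  have hPeval : ∀ q : ℕ, P.eval (q : ℝ) = ∏ t ∈ Finset.range p, ((q : ℝ) + ((m + t + 1 : ℕ) : ℝ)) := by
    intro q
    rw [hP, Polynomial.eval_prod]
    apply Finset.prod_congr rfl
    intro t _
    simp
  have main : ∀ q ∈ Finset.range (k' + 1),
      lagC m k' q * ((m + p + q).factorial : ℝ)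
        = (((k' + m).factorial : ℝ) / (k'.factorial : ℝ)) * ((-1 : ℝ) ^ q * (k'.choose q) * P.eval (q : ℝ)) := by
    intro q hq
    have hqk : q ≤ k' := Nat.lt_succ_iff.mp (Finset.mem_range.mp hq)
    have hcast := congrArg (Nat.cast : ℕ → ℝ) (choosefac k' m q hqk)
    push_cast at hcast
    have hnat : ((k' + m).choose (k' - q) : ℝ) * ((m + p + q).factorial : ℝ) * (k'.factorial : ℝ)
        = ((k' + m).factorial : ℝ) * ((k'.choose q : ℕ) : ℝ) * ((q.factorial : ℕ) : ℝ) * P.eval (q : ℝ) := by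
      rw [hPeval]
      have h2 : ((m + q).factorial : ℝ) * ∏ t ∈ Finset.range p, ((q : ℝ) + ((m + t + 1 : ℕ) : ℝ))
          = ((m + p + q).factorial : ℝ) := by
        rw [← natfac m q p]
        push_cast
        congr 1
        apply Finset.prod_congr rfl
        intro t _
        ring
      rw [← h2]
      linear_combination (∏ t ∈ Finset.range p, ((q : ℝ) + ((m + t + 1 : ℕ) : ℝ))) * hcast
    have hqf : ((q.factorial : ℕ) : ℝ) ≠ 0 := (Nat.cast_pos.mpr (Nat.factorial_pos q)).ne'
    have hkf : ((k'.factorial : ℕ) : ℝ) ≠ 0 := (Nat.cast_pos.mpr (Nat.factorial_pos k')).ne'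
    rw [lagC]
    field_simp
    linear_combination hnat
  rw [Finset.sum_congr rfl main, ← Finset.mul_sum]
  rw [fd k' P hPdeg]
  ring

lemma tele (n : ℕ) (t : ℝ) :
    (∑ r ∈ Finset.range (n + 1), ((n.factorial : ℝ) / r.factorial) * t ^ r)
      - (∑ r ∈ Finset.range (n + 1), ((n.factorial : ℝ) / r.factorial) * ((r : ℝ) * t ^ (r - 1))) = t ^ n := by
  have h2 : ∑ r ∈ Finset.range (n + 1), ((n.factorial : ℝ) / r.factorial) * ((r : ℝ) * t ^ (r - 1))
      = ∑ i ∈ Finset.range n, ((n.factorial : ℝ) / i.factorial) * t ^ i := by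
    rw [Finset.sum_range_succ']
    simp only [Nat.cast_zero, zero_mul, mul_zero, add_zero]
    apply Finset.sum_congr rfl
    intro i _
    have : ((i + 1).factorial : ℝ) = (i + 1) * i.factorial := by
      rw [Nat.factorial_succ]; push_cast; ring
    rw [this]
    have hif : (i.factorial : ℝ) ≠ 0 := (Nat.cast_pos.mpr (Nat.factorial_pos i)).ne'
    have h1 : ((i : ℝ) + 1) ≠ 0 := by positivity
    field_simp
    push_cast [Nat.add_sub_cancel, Nat.add_sub_cancel_left]
    ring
  rw [h2, Finset.sum_range_succ]
  simp [Nat.factorial_pos n, div_self, (Nat.cast_pos.mpr (Nat.factorial_pos n)).ne']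

/-- The truncated Gamma-type integral in closed form. -/
lemma integ (n : ℕ) (x : ℝ) :
    ∫ s in (0 : ℝ)..x, s ^ n * Real.exp (-s)
      = (n.factorial : ℝ) - Real.exp (-x) * ∑ r ∈ Finset.range (n + 1), ((n.factorial : ℝ) / r.factorial) * x ^ r := by
  have hderiv : ∀ t : ℝ, HasDerivAt
      (fun t => -(∑ r ∈ Finset.range (n + 1), ((n.factorial : ℝ) / r.factorial) * t ^ r) * Real.exp (-t))
      (t ^ n * Real.exp (-t)) t := by
    intro t
    have hg : HasDerivAt (fun t : ℝ => ∑ r ∈ Finset.range (n + 1), ((n.factorial : ℝ) / r.factorial) * t ^ r)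
        (∑ r ∈ Finset.range (n + 1), ((n.factorial : ℝ) / r.factorial) * ((r : ℝ) * t ^ (r - 1))) t := by
      apply HasDerivAt.fun_sum
      intro r _
      exact (hasDerivAt_pow r t).const_mul _
    have he : HasDerivAt (fun t : ℝ => Real.exp (-t)) (Real.exp (-t) * (-1)) t :=
      (hasDerivAt_neg t).exp
    have := (hg.fun_neg).fun_mul he
    refine this.congr_deriv ?_
    have ht := tele n t
    linear_combination (Real.exp (-t)) * ht
  have hint : IntervalIntegrable (fun s : ℝ => s ^ n * Real.exp (-s)) MeasureTheory.volume 0 x :=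
    (Continuous.mul (continuous_pow n) (Real.continuous_exp.comp continuous_neg)).intervalIntegrable 0 x
  rw [intervalIntegral.integral_eq_sub_of_hasDerivAt (fun t _ => hderiv t) hint]
  simp [Finset.sum_range_succ']
  ring

lemma helper (m k k' : ℕ) (hkk : k < k') :
    (fun b : ℝ => Real.exp (b / 2) *
        ∫ s in (0 : ℝ)..(b / 2), s ^ m * laguerre m k s * laguerre m k' s * Real.exp (-s))
      =O[atTop] fun b : ℝ => b ^ (m + k + k') := by
  have key : ∀ b : ℝ, Real.exp (b / 2) *
        ∫ s in (0 : ℝ)..(b / 2), s ^ m * laguerre m k s * laguerre m k' s * Real.exp (-s)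
      = -∑ p ∈ Finset.range (k + 1), ∑ q ∈ Finset.range (k' + 1),
          (lagC m k p * lagC m k' q) *
            ∑ r ∈ Finset.range (m + p + q + 1), (((m + p + q).factorial : ℝ) / r.factorial) * (b / 2) ^ r := by
    intro b
    have hexp : ∀ s : ℝ, s ^ m * laguerre m k s * laguerre m k' s * Real.exp (-s)
        = ∑ p ∈ Finset.range (k + 1), ∑ q ∈ Finset.range (k' + 1),
            (lagC m k p * lagC m k' q) * (s ^ (m + p + q) * Real.exp (-s)) := by
      intro s
      rw [laguerre_eq, laguerre_eq]
      simp only [Finset.sum_mul, Finset.mul_sum]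
      rw [Finset.sum_comm]
      apply Finset.sum_congr rfl
      intro p _
      apply Finset.sum_congr rfl
      intro q _
      rw [pow_add, pow_add]
      ring
    rw [intervalIntegral.integral_congr (fun s _ => hexp s)]
    have hci2 : ∀ p q : ℕ, IntervalIntegrable
        (fun x : ℝ => lagC m k p * lagC m k' q * (x ^ (m + p + q) * Real.exp (-x)))
        MeasureTheory.volume 0 (b / 2) := by
      intro p q
      apply Continuous.intervalIntegrable
      fun_prop
    have hci : ∀ p : ℕ, IntervalIntegrable
        (fun x : ℝ => ∑ q ∈ Finset.range (k' + 1), lagC m k p * lagC m k' q * (x ^ (m + p + q) * Real.exp (-x)))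
        MeasureTheory.volume 0 (b / 2) := by
      intro p
      apply Continuous.intervalIntegrable
      apply continuous_finset_sum
      intro q _
      fun_prop
    rw [intervalIntegral.integral_finset_sum (fun p _ => hci p)]
    rw [Finset.sum_congr rfl (fun p _ => intervalIntegral.integral_finset_sum (fun q _ => hci2 p q))]
    rw [Finset.sum_congr rfl (fun p _ => Finset.sum_congr rfl (fun q _ => by
      rw [intervalIntegral.integral_const_mul, integ (m + p + q) (b / 2)]))]
    -- now distribute exp (b/2)
    have h1 : Real.exp (b / 2) * Real.exp (-(b / 2)) = 1 := by
      rw [← Real.exp_add]; simp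
    have C0 : ∑ p ∈ Finset.range (k + 1), ∑ q ∈ Finset.range (k' + 1),
        (lagC m k p * lagC m k' q) * (((m + p + q).factorial : ℕ) : ℝ) = 0 := by
      apply Finset.sum_eq_zero
      intro p hp
      have hpk' : p < k' := by
        have := Finset.mem_range.mp hp; omega
      have ho := orth m p k' hpk'
      calc ∑ q ∈ Finset.range (k' + 1), (lagC m k p * lagC m k' q) * (((m + p + q).factorial : ℕ) : ℝ)
          = lagC m k p * ∑ q ∈ Finset.range (k' + 1), lagC m k' q * (((m + p + q).factorial : ℕ) : ℝ) := by
            rw [Finset.mul_sum]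
            apply Finset.sum_congr rfl
            intro q _
            ring
        _ = 0 := by rw [ho, mul_zero]
    calc Real.exp (b / 2) * ∑ p ∈ Finset.range (k + 1), ∑ q ∈ Finset.range (k' + 1),
          (lagC m k p * lagC m k' q) * ((((m + p + q).factorial : ℕ) : ℝ)
            - Real.exp (-(b / 2)) * ∑ r ∈ Finset.range (m + p + q + 1),
                (((m + p + q).factorial : ℝ) / r.factorial) * (b / 2) ^ r)
        = ∑ p ∈ Finset.range (k + 1), ∑ q ∈ Finset.range (k' + 1),
            ((lagC m k p * lagC m k' q) * (((m + p + q).factorial : ℕ) : ℝ) * Real.exp (b / 2)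
              - (lagC m k p * lagC m k' q) * ∑ r ∈ Finset.range (m + p + q + 1),
                  (((m + p + q).factorial : ℝ) / r.factorial) * (b / 2) ^ r) := by
          rw [Finset.mul_sum]
          apply Finset.sum_congr rfl
          intro p _
          rw [Finset.mul_sum]
          apply Finset.sum_congr rfl
          intro q _
          linear_combination (-((lagC m k p * lagC m k' q) * ∑ r ∈ Finset.range (m + p + q + 1),
            (((m + p + q).factorial : ℝ) / r.factorial) * (b / 2) ^ r)) * h1
      _ = (∑ p ∈ Finset.range (k + 1), ∑ q ∈ Finset.range (k' + 1),
            (lagC m k p * lagC m k' q) * (((m + p + q).factorial : ℕ) : ℝ)) * Real.exp (b / 2)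
          - ∑ p ∈ Finset.range (k + 1), ∑ q ∈ Finset.range (k' + 1),
              (lagC m k p * lagC m k' q) * ∑ r ∈ Finset.range (m + p + q + 1),
                  (((m + p + q).factorial : ℝ) / r.factorial) * (b / 2) ^ r := by
          rw [Finset.sum_mul, ← Finset.sum_sub_distrib]
          apply Finset.sum_congr rfl
          intro p _
          rw [Finset.sum_mul, ← Finset.sum_sub_distrib]
      _ = -∑ p ∈ Finset.range (k + 1), ∑ q ∈ Finset.range (k' + 1),
            (lagC m k p * lagC m k' q) * ∑ r ∈ Finset.range (m + p + q + 1),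
                (((m + p + q).factorial : ℝ) / r.factorial) * (b / 2) ^ r := by
          rw [C0]
          ring
  rw [show (fun b : ℝ => Real.exp (b / 2) *
        ∫ s in (0 : ℝ)..(b / 2), s ^ m * laguerre m k s * laguerre m k' s * Real.exp (-s))
      = fun b : ℝ => -∑ p ∈ Finset.range (k + 1), ∑ q ∈ Finset.range (k' + 1),
          (lagC m k p * lagC m k' q) *
            ∑ r ∈ Finset.range (m + p + q + 1), (((m + p + q).factorial : ℝ) / r.factorial) * (b / 2) ^ r
    from funext key]
  have base : ∀ r : ℕ, r ≤ m + k + k' → (fun b : ℝ => (b / 2) ^ r) =O[atTop] fun b : ℝ => b ^ (m + k + k') := by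
    intro r hr
    apply IsBigO.of_bound 1
    filter_upwards [eventually_ge_atTop (1 : ℝ)] with b hb
    have hb0 : (0 : ℝ) ≤ b / 2 := by linarith
    rw [Real.norm_eq_abs, Real.norm_eq_abs, abs_of_nonneg (pow_nonneg hb0 _),
      abs_of_nonneg (pow_nonneg (by linarith) _), one_mul]
    calc (b / 2) ^ r ≤ b ^ r := pow_le_pow_left₀ hb0 (by linarith) r
      _ ≤ b ^ (m + k + k') := pow_le_pow_right₀ hb hr
  apply IsBigO.neg_left
  apply IsBigO.fun_sum
  intro p hp
  apply IsBigO.fun_sum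
  intro q hq
  apply IsBigO.const_mul_left
  apply IsBigO.fun_sum
  intro r hr
  apply IsBigO.const_mul_left
  apply base
  have hp1 := Finset.mem_range.mp hp
  have hq1 := Finset.mem_range.mp hq
  have hr1 := Finset.mem_range.mp hr
  omega

/-- for `i ≠ j`,
`e^{b/2} ∫_0^{b/2} s^m L^m_{i-1}(s) L^m_{j-1}(s) e^{-s} ds = O(b^{m+i+j-2})` as `b → ∞`. -/
theorem truncated_orthogonality_bigO (m i j : ℕ) (hi : 1 ≤ i) (hj : 1 ≤ j) (hij : i ≠ j) :
    (fun b : ℝ =>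
        Real.exp (b / 2) *
          ∫ s in (0 : ℝ)..(b / 2),
            s ^ m * laguerre m (i - 1) s * laguerre m (j - 1) s * Real.exp (-s))
      =O[atTop] fun b : ℝ => b ^ (m + i + j - 2) := by
  rcases lt_or_gt_of_ne hij with h | h
  · have hh := helper m (i - 1) (j - 1) (by omega)
    rw [show m + (i - 1) + (j - 1) = m + i + j - 2 from by omega] at hh
    exact hh
  · have hh := helper m (j - 1) (i - 1) (by omega)
    rw [show m + (j - 1) + (i - 1) = m + i + j - 2 from by omega] at hh
    have hsw : (fun b : ℝ =>
        Real.exp (b / 2) *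
          ∫ s in (0 : ℝ)..(b / 2),
            s ^ m * laguerre m (i - 1) s * laguerre m (j - 1) s * Real.exp (-s))
      = (fun b : ℝ =>
        Real.exp (b / 2) *
          ∫ s in (0 : ℝ)..(b / 2),
            s ^ m * laguerre m (j - 1) s * laguerre m (i - 1) s * Real.exp (-s)) := by
      funext b
      congr 1
      apply intervalIntegral.integral_congr
      intro s _
      ring
    rw [hsw]
    exact hh
end
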